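/- arXiv:1607.07085 — 3 statements merged into one kernel-verified Lean document; each statement's English description precedes it below -/
import Mathlib

section
/- With B₁, B₂, B₃ defined as B_i = B_i(A) for the quadratic Lagrange polynomials sending λᵢ ↦ -1 and λⱼ ↦ 1 (j≠i), applied to a diagonalizable matrix A with distinct eigenvalues λ₁,λ₂,λ₃, one has B₁B₂ = B₂B₁ = -B₃, B₂B₃ = B₃B₂ = -B₁, and B₃B₁ = B₁B₃ = -B₂. -/
open Matrix Polynomial

private noncomputable def conjAlgHom {n : ℕ} (P : Matrix (Fin n) (Fin n) ℂ) (hP : IsUnit P.det) :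
    Matrix (Fin n) (Fin n) ℂ →ₐ[ℂ] Matrix (Fin n) (Fin n) ℂ where
  toFun X := P * X * P⁻¹
  map_one' := by show P * 1 * P⁻¹ = 1; rw [mul_one, mul_nonsing_inv _ hP]
  map_mul' X Y := by
    simp only [Matrix.mul_assoc]
    rw [← Matrix.mul_assoc P⁻¹ P, nonsing_inv_mul _ hP, Matrix.one_mul]
  map_zero' := by simp
  map_add' X Y := by noncomm_ring
  commutes' r := by
    simp only [Algebra.algebraMap_eq_smul_one]
    show P * r • 1 * P⁻¹ = r • 1
    rw [mul_smul_comm, mul_one, smul_mul_assoc, mul_nonsing_inv _ hP]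

private lemma aeval_conj {n : ℕ} (P : Matrix (Fin n) (Fin n) ℂ) (hP : IsUnit P.det)
    (d : Fin n → ℂ) (p : Polynomial ℂ) :
    aeval (P * Matrix.diagonal d * P⁻¹) p =
      P * Matrix.diagonal (fun i => p.eval (d i)) * P⁻¹ := by
  have h1 : (P * Matrix.diagonal d * P⁻¹) = conjAlgHom P hP (diagonalAlgHom ℂ d) := rfl
  rw [h1, aeval_algHom_apply, aeval_algHom_apply]
  have : aeval d p = fun i => p.eval (d i) := by
    funext i
    rw [show (aeval d p) i = (Pi.evalAlgHom ℂ _ i) (aeval d p) from rfl,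
      ← aeval_algHom_apply]
    simp [aeval_def, eval₂_eq_eval_map]
  rw [this]
  rfl

/-- With `Bᵢ = Bᵢ(A)` for the quadratic Lagrange polynomials sending `λᵢ ↦ -1`,
`λⱼ ↦ 1` (`j ≠ i`), applied to a diagonalizable matrix `A` with distinct eigenvalues
`λ₁, λ₂, λ₃`, one has `B₁B₂ = B₂B₁ = -B₃`, `B₂B₃ = B₃B₂ = -B₁`, `B₃B₁ = B₁B₃ = -B₂`. -/
theorem lagrange_matrices_product_relations
    (n : ℕ) (l₁ l₂ l₃ : ℂ) (h12 : l₁ ≠ l₂) (h13 : l₁ ≠ l₃) (h23 : l₂ ≠ l₃)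
    (P A : Matrix (Fin n) (Fin n) ℂ) (hP : IsUnit P.det)
    (d : Fin n → ℂ) (hd : ∀ i, d i = l₁ ∨ d i = l₂ ∨ d i = l₃)
    (hA : A = P * Matrix.diagonal d * P⁻¹)
    (B₁ B₂ B₃ : Polynomial ℂ)
    (hd₁ : B₁.degree ≤ 2) (hd₂ : B₂.degree ≤ 2) (hd₃ : B₃.degree ≤ 2)
    (e11 : B₁.eval l₁ = -1) (e12 : B₁.eval l₂ = 1) (e13 : B₁.eval l₃ = 1)
    (e21 : B₂.eval l₁ = 1) (e22 : B₂.eval l₂ = -1) (e23 : B₂.eval l₃ = 1)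
    (e31 : B₃.eval l₁ = 1) (e32 : B₃.eval l₂ = 1) (e33 : B₃.eval l₃ = -1) :
    (aeval A B₁ * aeval A B₂ = -(aeval A B₃) ∧ aeval A B₂ * aeval A B₁ = -(aeval A B₃)) ∧
    (aeval A B₂ * aeval A B₃ = -(aeval A B₁) ∧ aeval A B₃ * aeval A B₂ = -(aeval A B₁)) ∧
    (aeval A B₃ * aeval A B₁ = -(aeval A B₂) ∧ aeval A B₁ * aeval A B₃ = -(aeval A B₂)) := by
  subst hA
  have key : ∀ p q r : Polynomial ℂ,
      (∀ i, p.eval (d i) * q.eval (d i) = -(r.eval (d i))) →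
      aeval (P * Matrix.diagonal d * P⁻¹) p * aeval (P * Matrix.diagonal d * P⁻¹) q =
        -(aeval (P * Matrix.diagonal d * P⁻¹) r) := by
    intro p q r h
    rw [aeval_conj P hP, aeval_conj P hP, aeval_conj P hP]
    rw [show ∀ X Y : Matrix (Fin n) (Fin n) ℂ,
      (P * X * P⁻¹) * (P * Y * P⁻¹) = P * (X * (P⁻¹ * P) * Y) * P⁻¹ from fun X Y => by
        simp only [Matrix.mul_assoc], nonsing_inv_mul _ hP, Matrix.mul_one,
      diagonal_mul_diagonal]
    rw [show -(P * Matrix.diagonal (fun i => r.eval (d i)) * P⁻¹) =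
        P * -(Matrix.diagonal (fun i => r.eval (d i))) * P⁻¹ by noncomm_ring]
    congr 2
    rw [show (fun i => p.eval (d i) * q.eval (d i)) = fun i => -(r.eval (d i)) from funext h,
      diagonal_neg]
  have check : ∀ i, ∀ {a b c : Polynomial ℂ},
      (a.eval l₁ * b.eval l₁ = -(c.eval l₁)) → (a.eval l₂ * b.eval l₂ = -(c.eval l₂)) →
      (a.eval l₃ * b.eval l₃ = -(c.eval l₃)) → a.eval (d i) * b.eval (d i) = -(c.eval (d i)) := by
    intro i a b c h1 h2 h3
    rcases hd i with h | h | h <;> rw [h] <;> assumption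
  refine ⟨⟨key _ _ _ fun i => check i ?_ ?_ ?_, key _ _ _ fun i => check i ?_ ?_ ?_⟩,
    ⟨key _ _ _ fun i => check i ?_ ?_ ?_, key _ _ _ fun i => check i ?_ ?_ ?_⟩,
    ⟨key _ _ _ fun i => check i ?_ ?_ ?_, key _ _ _ fun i => check i ?_ ?_ ?_⟩⟩ <;>
    simp [e11, e12, e13, e21, e22, e23, e31, e32, e33]
end

section
/- Let M be a 6×6 matrix of the form M = (I - Bᵀ)N where B is diagonalizable with B² = I and eigenvalue 1 of multiplicity 4 and eigenvalue -1 of multiplicity 2, and N commutes with Bᵀ. If tr(M^k)=0 for odd k and rank conditions give only two nonzero elementary invariants, then the characteristic polynomial of M is det(λI - M) = λ⁶ - (1/2)λ⁴ tr(M²). -/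
open Matrix Polynomial

private lemma reindex_block_eq (a b c d : ℂ) :
    (Matrix.reindex finSumFinEquiv finSumFinEquiv
      (Matrix.fromBlocks (0 : Matrix (Fin 4) (Fin 4) ℂ) 0 0 !![a,b;c,d]))
    = !![0,0,0,0,0,0; 0,0,0,0,0,0; 0,0,0,0,0,0; 0,0,0,0,0,0;
        0,0,0,0,a,b; 0,0,0,0,c,d] := by
  ext i j
  fin_cases i <;> fin_cases j <;> rfl

private lemma block_charpoly (a b c d : ℂ) :
    (!![0,0,0,0,0,0; 0,0,0,0,0,0; 0,0,0,0,0,0; 0,0,0,0,0,0;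
        0,0,0,0,a,b; 0,0,0,0,c,d] : Matrix (Fin 6) (Fin 6) ℂ).charpoly
    = X ^ 4 * (X ^ 2 - C (a + d) * X + C (a * d - b * c)) := by
  rw [← reindex_block_eq, Matrix.charpoly_reindex, Matrix.charpoly_fromBlocks_zero₂₁]
  have h0 : (0 : Matrix (Fin 4) (Fin 4) ℂ).charpoly = X ^ 4 := by
    rw [Matrix.charpoly]
    simp [charmatrix, Matrix.det_diagonal]
  have h2 : (!![a,b;c,d] : Matrix (Fin 2) (Fin 2) ℂ).charpoly
      = X ^ 2 - C (a + d) * X + C (a * d - b * c) := by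
    rw [Matrix.charpoly]
    simp [charmatrix, Matrix.det_fin_two]
    ring
  rw [h0, h2]

private lemma block_trace (a b c d : ℂ) :
    (!![0,0,0,0,0,0; 0,0,0,0,0,0; 0,0,0,0,0,0; 0,0,0,0,0,0;
        0,0,0,0,a,b; 0,0,0,0,c,d] : Matrix (Fin 6) (Fin 6) ℂ).trace = a + d := by
  simp [Matrix.trace, Fin.sum_univ_succ, Matrix.cons_val_zero, Matrix.cons_val_succ]

private lemma block_trace_sq (a b c d : ℂ) :
    ((!![0,0,0,0,0,0; 0,0,0,0,0,0; 0,0,0,0,0,0; 0,0,0,0,0,0;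
        0,0,0,0,a,b; 0,0,0,0,c,d] : Matrix (Fin 6) (Fin 6) ℂ)
      * !![0,0,0,0,0,0; 0,0,0,0,0,0; 0,0,0,0,0,0; 0,0,0,0,0,0;
        0,0,0,0,a,b; 0,0,0,0,c,d]).trace = a*a + b*c + (c*b + d*d) := by
  simp [Matrix.trace, Matrix.mul_apply, Fin.sum_univ_succ, Matrix.cons_val_zero,
    Matrix.cons_val_succ]

private lemma conj_charpoly (Q A : Matrix (Fin 6) (Fin 6) ℂ) (hQ : IsUnit Q.det) :
    (Q⁻¹ * A * Q).charpoly = A.charpoly := by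
  have h1 : Q⁻¹ * Q = 1 := Matrix.nonsing_inv_mul Q hQ
  have hc : charmatrix (Q⁻¹ * A * Q) =
      (Q⁻¹).map (C : ℂ →+* ℂ[X]) * charmatrix A * Q.map (C : ℂ →+* ℂ[X]) := by
    rw [charmatrix, RingHom.mapMatrix_apply, Matrix.map_mul, Matrix.map_mul,
      charmatrix, RingHom.mapMatrix_apply, mul_sub, sub_mul]
    congr 1
    rw [mul_assoc, (Matrix.scalar_commute X (Commute.all X) (Q.map C)).eq, ← mul_assoc,
      ← Matrix.map_mul, h1]
    simp
  have key : ((Q⁻¹).map (C : ℂ →+* ℂ[X])).det * (Q.map (C : ℂ →+* ℂ[X])).det = 1 := by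
    rw [← Matrix.det_mul, ← Matrix.map_mul, h1]; simp
  rw [Matrix.charpoly, hc, Matrix.det_mul, Matrix.det_mul, mul_right_comm, key, one_mul,
    Matrix.charpoly]

/-- Let `M = (I - Bᵀ)N` where `B` is diagonalizable with `B² = I`, eigenvalue `1`
of multiplicity 4 and eigenvalue `-1` of multiplicity 2, `N` commutes with `Bᵀ`,
and all odd-power traces of `M` vanish. Then the characteristic polynomial of `M`
is `λ⁶ - (1/2)λ⁴ tr(M²)`. -/
theorem charpoly_reduction
    (B N P : Matrix (Fin 6) (Fin 6) ℂ) (hP : IsUnit P.det)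
    (hB : B = P * Matrix.diagonal ![1, 1, 1, 1, -1, -1] * P⁻¹)
    (hcomm : N * Bᵀ = Bᵀ * N)
    (htr : ∀ k : ℕ, Odd k → (((1 - Bᵀ) * N) ^ k).trace = 0) :
    ((1 - Bᵀ) * N).charpoly
      = X ^ 6 - C ((1 / 2 : ℂ) * (((1 - Bᵀ) * N) ^ 2).trace) * X ^ 4 := by
  obtain ⟨v, hveq⟩ : ∃ v : Fin 6 → ℂ, v = ![1, 1, 1, 1, -1, -1] := ⟨_, rfl⟩
  obtain ⟨D, hDeq⟩ : ∃ D : Matrix (Fin 6) (Fin 6) ℂ, D = Matrix.diagonal v := ⟨_, rfl⟩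
  obtain ⟨Q, hQdef⟩ : ∃ Q : Matrix (Fin 6) (Fin 6) ℂ, Q = Pᵀ := ⟨_, rfl⟩
  have hQ : IsUnit Q.det := by rwa [hQdef, Matrix.det_transpose]
  have hQi : Q⁻¹ * Q = 1 := Matrix.nonsing_inv_mul Q hQ
  have hQi' : Q * Q⁻¹ = 1 := Matrix.mul_nonsing_inv Q hQ
  have cQ : ∀ X : Matrix (Fin 6) (Fin 6) ℂ, Q⁻¹ * (Q * X) = X := fun X => by
    rw [← mul_assoc, hQi, one_mul]
  have cQ' : ∀ X : Matrix (Fin 6) (Fin 6) ℂ, Q * (Q⁻¹ * X) = X := fun X => by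
    rw [← mul_assoc, hQi', one_mul]
  have cQ2 : ∀ X : Matrix (Fin 6) (Fin 6) ℂ, X * (Q⁻¹ * Q) = X := fun X => by
    rw [hQi, mul_one]
  have cQ2' : ∀ X : Matrix (Fin 6) (Fin 6) ℂ, X * (Q * Q⁻¹) = X := fun X => by
    rw [hQi', mul_one]
  have hBt : Bᵀ = Q⁻¹ * D * Q := by
    rw [hB, hDeq, hveq, Matrix.transpose_mul, Matrix.transpose_mul,
      Matrix.transpose_nonsing_inv, Matrix.diagonal_transpose, ← hQdef, mul_assoc]
  obtain ⟨Nt, hNteq⟩ : ∃ X : Matrix (Fin 6) (Fin 6) ℂ, X = Q * N * Q⁻¹ := ⟨_, rfl⟩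
  obtain ⟨W, hWeq⟩ : ∃ X : Matrix (Fin 6) (Fin 6) ℂ, X = (1 - D) * Nt := ⟨_, rfl⟩
  have hM : (1 - Bᵀ) * N = Q⁻¹ * W * Q := by
    rw [hWeq, hNteq, hBt]
    simp only [sub_mul, mul_sub, one_mul, mul_one, Matrix.mul_assoc, cQ, cQ', cQ2, cQ2']
  have hD2 : D = Q * Bᵀ * Q⁻¹ := by
    rw [hBt]
    simp only [Matrix.mul_assoc, cQ, cQ', cQ2, cQ2']
  have haux : N * (Bᵀ * Q⁻¹) = Bᵀ * (N * Q⁻¹) := by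
    rw [← mul_assoc, ← mul_assoc, hcomm]
  have hcomm' : Nt * D = D * Nt := by
    rw [hNteq, hD2]
    simp only [Matrix.mul_assoc, cQ, cQ', cQ2, cQ2', haux]
  have hNz : ∀ i j : Fin 6, v i ≠ v j → Nt i j = 0 := by
    intro i j hij
    have h : (Nt * D) i j = (D * Nt) i j := by rw [hcomm']
    rw [hDeq, Matrix.mul_diagonal, Matrix.diagonal_mul] at h
    have h2 : (v i - v j) * Nt i j = 0 := by linear_combination -h
    exact (mul_eq_zero.mp h2).resolve_left (sub_ne_zero.mpr hij)
  have hv1 : ∀ i : Fin 6, (i : ℕ) < 4 → v i = 1 := by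
    rw [hveq]; intro i hi
    fin_cases i <;> first | rfl | simp at hi
  have hvm1 : ∀ i : Fin 6, 4 ≤ (i : ℕ) → v i = -1 := by
    rw [hveq]; intro i hi
    fin_cases i <;> first | rfl | simp at hi
  have h1D : (1 : Matrix (Fin 6) (Fin 6) ℂ) - D = Matrix.diagonal (fun k => 1 - v k) := by
    rw [hDeq, ← Matrix.diagonal_one, Matrix.diagonal_sub]
  have hWe : ∀ i j : Fin 6, W i j = (1 - v i) * Nt i j := by
    intro i j
    rw [hWeq, h1D, Matrix.diagonal_mul]
  have hWlow : ∀ i j : Fin 6, (i : ℕ) < 4 → W i j = 0 := by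
    intro i j hij
    rw [hWe, hv1 i hij, sub_self, zero_mul]
  have hWmix : ∀ i j : Fin 6, 4 ≤ (i : ℕ) → (j : ℕ) < 4 → W i j = 0 := by
    intro i j hi hj
    rw [hWe, hNz i j (by rw [hvm1 i hi, hv1 j hj]; norm_num), mul_zero]
  obtain ⟨a, ha⟩ : ∃ x : ℂ, x = W 4 4 := ⟨_, rfl⟩
  obtain ⟨b, hb⟩ : ∃ x : ℂ, x = W 4 5 := ⟨_, rfl⟩
  obtain ⟨c, hc⟩ : ∃ x : ℂ, x = W 5 4 := ⟨_, rfl⟩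
  obtain ⟨d, hd⟩ : ∃ x : ℂ, x = W 5 5 := ⟨_, rfl⟩
  have hWexp : W = !![0,0,0,0,0,0; 0,0,0,0,0,0; 0,0,0,0,0,0; 0,0,0,0,0,0;
      0,0,0,0,a,b; 0,0,0,0,c,d] := by
    rw [← reindex_block_eq]
    have hsum : Matrix.reindex finSumFinEquiv.symm finSumFinEquiv.symm W
        = Matrix.fromBlocks (0 : Matrix (Fin 4) (Fin 4) ℂ) 0 0 !![a, b; c, d] := by
      ext i j
      cases i with
      | inl i =>
          cases j <;>
          · rw [Matrix.reindex_apply, Matrix.submatrix_apply, Equiv.symm_symm]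
            rw [hWlow _ _ (by rw [finSumFinEquiv_apply_left]; exact i.isLt)]
            simp [Matrix.fromBlocks]
      | inr i =>
          cases j with
          | inl j =>
              rw [Matrix.reindex_apply, Matrix.submatrix_apply, Equiv.symm_symm]
              rw [hWmix _ _ (by rw [finSumFinEquiv_apply_right]; simp)
                (by rw [finSumFinEquiv_apply_left]; exact j.isLt)]
              simp [Matrix.fromBlocks]
          | inr j =>
              fin_cases i <;> fin_cases j <;>
                first | exact ha.symm | exact hb.symm | exact hc.symm | exact hd.symm
    have h2 := congrArg (Matrix.reindex finSumFinEquiv finSumFinEquiv) hsum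
    rw [Matrix.reindex_apply, Matrix.reindex_apply, Matrix.submatrix_submatrix] at h2
    simpa using h2
  have htrW : ((1 - Bᵀ) * N).trace = a + d := by
    rw [hM, Matrix.trace_mul_comm, ← mul_assoc, hQi', one_mul, hWexp, block_trace]
  have htrW2 : (((1 - Bᵀ) * N) ^ 2).trace = a * a + b * c + (c * b + d * d) := by
    have hM2 : ((1 - Bᵀ) * N) ^ 2 = Q⁻¹ * (W * W) * Q := by
      rw [pow_two, hM]
      simp only [Matrix.mul_assoc, cQ, cQ', cQ2, cQ2']
    rw [hM2, Matrix.trace_mul_comm, ← mul_assoc, hQi', one_mul, hWexp, block_trace_sq]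
  have had : a + d = 0 := by
    have h1 := htr 1 odd_one
    rwa [pow_one, htrW] at h1
  rw [htrW2, hM, conj_charpoly Q W hQ, hWexp, block_charpoly, had, map_zero, zero_mul]
  have e1 : a * d - b * c = -((1 / 2 : ℂ) * (a * a + b * c + (c * b + d * d))) := by
    linear_combination (1 / 2 * (a + d)) * had
  rw [e1, map_neg]
  ring
end

section
/- Let f be a quadratic homogeneous vector field on ℝⁿ (each component a homogeneous quadratic polynomial), with Kahan map Φ_f(x,ε) = (I - εf'(x))⁻¹x (defined where the matrix is invertible). Then Φ_f(x,ε) satisfies the reversibility property Φ_f(·,ε)⁻¹ = Φ_f(·,-ε), i.e. if x̃ = (I - εf'(x))⁻¹x then x = (I + εf'(x̃))⁻¹x̃. -/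
/-!
The Jacobian of `f x = Q x x` acts by `f'(x) v = 2 Q(x, v)`, which is symmetric in `x` and `v`.
Hence the Kahan relation `x̃ - ε f'(x) x̃ = x` can be read as `x + ε f'(x̃) x = x̃`, which is the
Kahan step with step size `-ε` taking `x̃` back to `x`.
-/

open Matrix

/-- The Jacobian matrix of a vector field `f : ℝⁿ → ℝⁿ`. -/
noncomputable def jac {ι : Type*} [Fintype ι] [DecidableEq ι]
    (f : (ι → ℝ) → (ι → ℝ)) (x : ι → ℝ) : Matrix ι ι ℝ :=
  fun i j => fderiv ℝ (fun y => f y i) x (Pi.single j 1)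

theorem LinearMap.hasFDerivAt_apply_self {𝕜 E F : Type*} [NontriviallyNormedField 𝕜]
    [CompleteSpace 𝕜] [NormedAddCommGroup E] [NormedSpace 𝕜 E] [FiniteDimensional 𝕜 E]
    [NormedAddCommGroup F] [NormedSpace 𝕜 F] (B : E →ₗ[𝕜] E →ₗ[𝕜] F) (x : E) :
    HasFDerivAt (fun y => B y y) (LinearMap.toContinuousLinearMap (B x + B.flip x)) x := by
  let B' : E →L[𝕜] E →L[𝕜] F :=
    LinearMap.toContinuousLinearMap (LinearMap.toContinuousLinearMap.toLinearMap ∘ₗ B)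
  refine (B'.hasFDerivAt_of_bilinear (hasFDerivAt_id x) (hasFDerivAt_id x)).congr_fderiv ?_
  ext v
  simp [B']

section Jacobian

variable {ι : Type*} [Fintype ι] [DecidableEq ι]

theorem jac_eq_toMatrix' {f : (ι → ℝ) → ι → ℝ} {x : ι → ℝ} (hf : DifferentiableAt ℝ f x) :
    jac f x = LinearMap.toMatrix' (fderiv ℝ f x : (ι → ℝ) →ₗ[ℝ] ι → ℝ) := by
  ext i j
  rw [jac, LinearMap.toMatrix'_apply, fderiv_apply hf]
  rfl

theorem jac_mulVec {f : (ι → ℝ) → ι → ℝ} {x : ι → ℝ} (hf : DifferentiableAt ℝ f x)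
    (v : ι → ℝ) : jac f x *ᵥ v = fderiv ℝ f x v := by
  rw [jac_eq_toMatrix' hf, LinearMap.toMatrix'_mulVec]
  rfl

theorem jac_mulVec_of_eq_apply_self {Q : (ι → ℝ) →ₗ[ℝ] (ι → ℝ) →ₗ[ℝ] ι → ℝ}
    (hQ : ∀ x y, Q x y = Q y x) {f : (ι → ℝ) → ι → ℝ} (hf : ∀ x, f x = Q x x) (x v : ι → ℝ) :
    jac f x *ᵥ v = (2 : ℝ) • Q x v := by
  obtain rfl : f = fun y => Q y y := funext hf
  have hderiv := Q.hasFDerivAt_apply_self x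
  rw [jac_mulVec hderiv.differentiableAt, hderiv.fderiv]
  simp [hQ v x, two_smul]

end Jacobian

theorem Matrix.one_add_smul_mulVec_of_one_sub_smul_mulVec {ι R : Type*} [Fintype ι]
    [DecidableEq ι] [CommRing R] {J : (ι → R) → Matrix ι ι R} (hJ : ∀ x y, J x *ᵥ y = J y *ᵥ x)
    {ε : R} {x y : ι → R} (h : (1 - ε • J x) *ᵥ y = x) : (1 + ε • J y) *ᵥ x = y := by
  rw [sub_mulVec, one_mulVec, smul_mulVec, hJ] at h
  rw [add_mulVec, one_mulVec, smul_mulVec]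
  exact (sub_eq_iff_eq_add.mp h).symm

/-- Reversibility of the Kahan map of a homogeneous quadratic vector field
`f(x) = Q(x,x)` (with `Q` symmetric bilinear): if `xt = (I - εf'(x))⁻¹x`, then
`x = (I + εf'(xt))⁻¹xt`, i.e. `Φ_f(·,ε)⁻¹ = Φ_f(·,-ε)`. -/
theorem kahan_reversibility
    (n : ℕ) (Q : (Fin n → ℝ) →ₗ[ℝ] (Fin n → ℝ) →ₗ[ℝ] (Fin n → ℝ))
    (hQsymm : ∀ x y, Q x y = Q y x)
    (f : (Fin n → ℝ) → (Fin n → ℝ)) (hf : ∀ x, f x = Q x x)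
    (ε : ℝ) (x xt : Fin n → ℝ)
    (hinv : IsUnit (1 - ε • jac f x).det)
    (hxt : xt = (1 - ε • jac f x)⁻¹.mulVec x)
    (hinv' : IsUnit (1 + ε • jac f xt).det) :
    x = (1 + ε • jac f xt)⁻¹.mulVec xt := by
  have hjac_symm : ∀ y z, jac f y *ᵥ z = jac f z *ᵥ y := fun y z => by
    rw [jac_mulVec_of_eq_apply_self hQsymm hf, jac_mulVec_of_eq_apply_self hQsymm hf, hQsymm]
  have hforward : (1 - ε • jac f x) *ᵥ xt = x := by
    rw [hxt, mulVec_mulVec, mul_nonsing_inv _ hinv, one_mulVec]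
  have hbackward : (1 + ε • jac f xt) *ᵥ x = xt :=
    one_add_smul_mulVec_of_one_sub_smul_mulVec hjac_symm hforward
  let := invertibleOfIsUnitDet _ hinv'
  exact (inv_mulVec_eq_vec hbackward.symm).symm
end
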